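/- arXiv:2010.14673 — 2 statements merged into one kernel-verified Lean document; each statement's English description precedes it below -/
import Mathlib

section
/- Stability of spectral risk measures under Wasserstein perturbation and L¹ perturbation of the loss: if π_n, π ∈ P_r(W), each L_n : W → ℝ is Hölder continuous with exponent q ≤ 1 and constant C_q independent of n, L_n ∈ L¹(π_n) ∩ L¹(π), L_n → L in L¹(π), and W_r(π_n, π) → 0, then R_{π_n,σ}(L_n) → R_{π,σ}(L), with the quantitative bound |R_{π_n,σ}(L_n) - R_{π,σ}(L)| ≤ C_q W_r(π, π_n) ‖σ‖_{r_q} + ‖L_n - L‖_{L¹(π)} ‖σ‖_∞, where r_q ≥ r/(r-q). -/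
open MeasureTheory Filter Set

/-- The `r`-Wasserstein distance between two probability measures on a metric space,
defined via the optimal transport (coupling) formulation. -/
noncomputable def wassersteinDist {W : Type*} [MeasurableSpace W] [PseudoMetricSpace W]
    (r : ℝ) (π₁ π₂ : Measure W) : ℝ :=
  (sInf {x : ℝ | ∃ m : Measure (W × W), IsProbabilityMeasure m ∧
      m.map Prod.fst = π₁ ∧ m.map Prod.snd = π₂ ∧
      x = ∫ p, dist p.1 p.2 ^ r ∂m}) ^ (1 / r)

/-- The generalized inverse distribution function (quantile function) of `L` under `π`. -/
noncomputable def quantileFn {W : Type*} [MeasurableSpace W]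
    (π : Measure W) (L : W → ℝ) (u : ℝ) : ℝ :=
  sInf {x : ℝ | u ≤ (π {w | L w ≤ x}).toReal}

/-- The spectral risk measure of `L` under `π` with spectral function `σ`. -/
noncomputable def spectralRisk {W : Type*} [MeasurableSpace W]
    (π : Measure W) (L : W → ℝ) (σ : ℝ → ℝ) : ℝ :=
  ∫ u in (0:ℝ)..1, quantileFn π L u * σ u

/-! The quantile map is an `L¹`-contraction: `∫₀¹ |q_f - q_g| ≤ ∫ |f - g| dπ`. Writing
`|a - b| = λ({x | a ≤ x} ∆ {x | b ≤ x})` and using the Galois connection `q(u) ≤ x ↔ u ≤ F(x)`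
between a quantile function and its cdf, Tonelli turns the left side into `∫ |F_f - F_g| dx`, and
`|F_f(x) - F_g(x)| ≤ π({f ≤ x} ∆ {g ≤ x})` turns that, by Tonelli again, into `∫ |f - g| dπ`.
Multiplying by the bounded spectral function gives the `L¹` stability of the risk, and the
triangle inequality with the Pichler estimate gives the bound and hence the convergence. -/

open scoped ENNReal Topology symmDiff
open ProbabilityTheory

theorem Real.volume_Ici_symmDiff_Ici (a b : ℝ) :
    volume (Ici a ∆ Ici b) = ENNReal.ofReal |a - b| := by
  rw [measure_symmDiff_eq measurableSet_Ici.nullMeasurableSet measurableSet_Ici.nullMeasurableSet,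
    Ici_sdiff_Ici, Ici_sdiff_Ici, Real.volume_Ico, Real.volume_Ico]
  rcases le_total a b with h | h
  · rw [ENNReal.ofReal_of_nonpos (sub_nonpos.2 h), add_zero, abs_sub_comm,
      abs_of_nonneg (sub_nonneg.2 h)]
  · rw [ENNReal.ofReal_of_nonpos (sub_nonpos.2 h), zero_add, abs_of_nonneg (sub_nonneg.2 h)]

theorem Real.volume_Iic_symmDiff_Iic (a b : ℝ) :
    volume (Iic a ∆ Iic b) = ENNReal.ofReal |a - b| := by
  rw [measure_symmDiff_eq measurableSet_Iic.nullMeasurableSet measurableSet_Iic.nullMeasurableSet,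
    Iic_sdiff_Iic, Iic_sdiff_Iic, Real.volume_Ioc, Real.volume_Ioc]
  rcases le_total a b with h | h
  · rw [ENNReal.ofReal_of_nonpos (sub_nonpos.2 h), zero_add, abs_sub_comm,
      abs_of_nonneg (sub_nonneg.2 h)]
  · rw [ENNReal.ofReal_of_nonpos (sub_nonpos.2 h), add_zero, abs_of_nonneg (sub_nonneg.2 h)]

theorem StieltjesFunction.sInf_le_iff {F : StieltjesFunction ℝ} {u : ℝ} (hbot : ∃ y, F y < u)
    (htop : ∃ y, u ≤ F y) (x : ℝ) : sInf {y | u ≤ F y} ≤ x ↔ u ≤ F x := by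
  set S := {y | u ≤ F y}
  obtain ⟨a, ha⟩ := hbot
  have hbdd : BddBelow S :=
    ⟨a, fun y hy => not_lt.1 fun hya => (lt_of_le_of_lt (F.mono hya.le) ha).not_ge hy⟩
  -- right-continuity of `F` makes `S` contain its infimum
  have hmem : sInf S ∈ S := by
    have hcont : ContinuousWithinAt F S (sInf S) :=
      (F.right_continuous _).mono fun y hy => csInf_le hbdd hy
    exact closure_minimal (image_subset_iff.2 fun y hy => hy) isClosed_Ici
      (hcont.mem_closure_image (csInf_mem_closure htop hbdd))
  exact ⟨fun h => hmem.trans (F.mono h), fun h => csInf_le hbdd h⟩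

noncomputable def quantile (μ : Measure ℝ) (u : ℝ) : ℝ := sInf {x | u ≤ cdf μ x}

section Quantile

variable (μ : Measure ℝ) {u : ℝ}

theorem quantile_le_iff (hu : u ∈ Ioo (0 : ℝ) 1) (x : ℝ) : quantile μ u ≤ x ↔ u ≤ cdf μ x :=
  (cdf μ).sInf_le_iff ((tendsto_cdf_atBot μ).eventually_lt_const hu.1).exists
    ((tendsto_cdf_atTop μ).eventually_const_le hu.2).exists x

theorem monotoneOn_quantile : MonotoneOn (quantile μ) (Ioo 0 1) :=
  fun _ hu _ hv huv => (quantile_le_iff μ hu _).2 (huv.trans ((quantile_le_iff μ hv _).1 le_rfl))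

theorem quantile_dirac (a : ℝ) (hu : u ∈ Ioo (0 : ℝ) 1) : quantile (Measure.dirac a) u = a := by
  have hcdf : ∀ x, cdf (Measure.dirac a) x = if a ≤ x then 1 else 0 := fun x => by
    rw [cdf_eq_real, measureReal_def, Measure.dirac_apply' _ measurableSet_Iic]
    split_ifs with h <;> simp [h]
  refine le_antisymm ((quantile_le_iff _ hu a).2 (by simp [hcdf, hu.2.le])) (not_lt.1 fun h => ?_)
  have := (quantile_le_iff (Measure.dirac a) hu _).1 le_rfl
  rw [hcdf, if_neg h.not_ge] at this
  exact hu.1.not_ge this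

theorem lintegral_abs_quantile_sub_le (ν : Measure ℝ) :
    ∫⁻ u in Ioo 0 1, ENNReal.ofReal |quantile μ u - quantile ν u| ≤
      ∫⁻ x, ENNReal.ofReal |cdf μ x - cdf ν x| := by
  set S : Set (ℝ × ℝ) := {p | p.1 ≤ cdf μ p.2} ∆ {p | p.1 ≤ cdf ν p.2}
  have hS : MeasurableSet S :=
    (measurableSet_le measurable_fst ((monotone_cdf μ).measurable.comp measurable_snd)).symmDiff
      (measurableSet_le measurable_fst ((monotone_cdf ν).measurable.comp measurable_snd))
  calc ∫⁻ u in Ioo 0 1, ENNReal.ofReal |quantile μ u - quantile ν u|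
      = ∫⁻ u in Ioo 0 1, volume (Prod.mk u ⁻¹' S) := by
        refine setLIntegral_congr_fun measurableSet_Ioo fun u hu => ?_
        have : Prod.mk u ⁻¹' S = Ici (quantile μ u) ∆ Ici (quantile ν u) := by
          ext x; simp [S, mem_symmDiff, quantile_le_iff _ hu]
        rw [this, Real.volume_Ici_symmDiff_Ici]
    _ = ∫⁻ x, volume.restrict (Ioo 0 1) ((fun u => (u, x)) ⁻¹' S) := by
        rw [← Measure.prod_apply hS, Measure.prod_apply_symm hS]
    _ ≤ ∫⁻ x, volume (Iic (cdf μ x) ∆ Iic (cdf ν x)) :=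
        lintegral_mono fun x => Measure.restrict_le_self _
    _ = ∫⁻ x, ENNReal.ofReal |cdf μ x - cdf ν x| := by
        simp_rw [Real.volume_Iic_symmDiff_Iic]

end Quantile

section QuantileFn

variable {W : Type*} [MeasurableSpace W] (π : Measure W) [IsProbabilityMeasure π] {f g : W → ℝ}

theorem quantileFn_eq_quantile_map (hf : AEMeasurable f π) :
    quantileFn π f = quantile (π.map f) := by
  have := Measure.isProbabilityMeasure_map hf
  ext u
  simp only [quantileFn, quantile, cdf_eq_real, measureReal_def,
    Measure.map_apply_of_aemeasurable hf measurableSet_Iic]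
  rfl

theorem quantileFn_zero {u : ℝ} (hu : u ∈ Ioo (0 : ℝ) 1) : quantileFn π (fun _ => 0) u = 0 := by
  rw [quantileFn_eq_quantile_map π aemeasurable_const, Measure.map_const, measure_univ, one_smul,
    quantile_dirac _ hu]

theorem lintegral_abs_cdf_map_sub_le (hf : Measurable f) (hg : Measurable g) :
    ∫⁻ x, ENNReal.ofReal |cdf (π.map f) x - cdf (π.map g) x| ≤
      ∫⁻ w, ENNReal.ofReal |f w - g w| ∂π := by
  have := Measure.isProbabilityMeasure_map (μ := π) hf.aemeasurable
  have := Measure.isProbabilityMeasure_map (μ := π) hg.aemeasurable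
  set S : Set (W × ℝ) := {p | f p.1 ≤ p.2} ∆ {p | g p.1 ≤ p.2}
  have hS : MeasurableSet S :=
    (measurableSet_le (hf.comp measurable_fst) measurable_snd).symmDiff
      (measurableSet_le (hg.comp measurable_fst) measurable_snd)
  calc ∫⁻ x, ENNReal.ofReal |cdf (π.map f) x - cdf (π.map g) x|
      ≤ ∫⁻ x, π ((fun w => (w, x)) ⁻¹' S) := by
        refine lintegral_mono fun x => ENNReal.ofReal_le_of_le_toReal ?_
        rw [cdf_eq_real, cdf_eq_real, map_measureReal_apply hf measurableSet_Iic,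
          map_measureReal_apply hg measurableSet_Iic]
        exact abs_measureReal_sub_le_measureReal_symmDiff (hf measurableSet_Iic).nullMeasurableSet
          (hg measurableSet_Iic).nullMeasurableSet
    _ = ∫⁻ w, volume (Prod.mk w ⁻¹' S) ∂π := by
        rw [← Measure.prod_apply_symm hS, Measure.prod_apply hS]
    _ = ∫⁻ w, ENNReal.ofReal |f w - g w| ∂π := by
        simp_rw [← Real.volume_Ici_symmDiff_Ici]
        rfl

theorem lintegral_abs_quantileFn_sub_le (hf : AEMeasurable f π) (hg : AEMeasurable g π) :
    ∫⁻ u in Ioo 0 1, ENNReal.ofReal |quantileFn π f u - quantileFn π g u| ≤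
      ∫⁻ w, ENNReal.ofReal |f w - g w| ∂π := by
  rw [quantileFn_eq_quantile_map π hf, quantileFn_eq_quantile_map π hg,
    Measure.map_congr hf.ae_eq_mk, Measure.map_congr hg.ae_eq_mk]
  calc _ ≤ _ := lintegral_abs_quantile_sub_le _ _
    _ ≤ ∫⁻ w, ENNReal.ofReal |hf.mk f w - hg.mk g w| ∂π :=
        lintegral_abs_cdf_map_sub_le π hf.measurable_mk hg.measurable_mk
    _ = ∫⁻ w, ENNReal.ofReal |f w - g w| ∂π := by
        refine lintegral_congr_ae ?_
        filter_upwards [hf.ae_eq_mk, hg.ae_eq_mk] with w hfw hgw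
        rw [hfw, hgw]

theorem integrableOn_quantileFn (hf : Integrable f π) :
    IntegrableOn (quantileFn π f) (Ioo 0 1) := by
  have hmono : MonotoneOn (quantileFn π f) (Ioo 0 1) := by
    rw [quantileFn_eq_quantile_map π hf.aemeasurable]
    exact monotoneOn_quantile _
  refine ⟨(aemeasurable_restrict_of_monotoneOn measurableSet_Ioo hmono).aestronglyMeasurable, ?_⟩
  rw [hasFiniteIntegral_iff_norm]
  calc ∫⁻ u in Ioo 0 1, ENNReal.ofReal ‖quantileFn π f u‖
      = ∫⁻ u in Ioo 0 1, ENNReal.ofReal |quantileFn π f u - quantileFn π (fun _ => 0) u| :=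
        setLIntegral_congr_fun measurableSet_Ioo fun u hu => by
          rw [quantileFn_zero π hu, sub_zero, Real.norm_eq_abs]
    _ ≤ ∫⁻ w, ENNReal.ofReal |f w - 0| ∂π :=
        lintegral_abs_quantileFn_sub_le π hf.aemeasurable aemeasurable_const
    _ < ⊤ := by simpa [Real.norm_eq_abs] using (hasFiniteIntegral_iff_norm f).1 hf.2

theorem integral_abs_quantileFn_sub_le (hf : Integrable f π) (hg : Integrable g π) :
    ∫ u in Ioo 0 1, |quantileFn π f u - quantileFn π g u| ≤ ∫ w, |f w - g w| ∂π := by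
  have hQ : IntegrableOn (fun u => |quantileFn π f u - quantileFn π g u|) (Ioo 0 1) :=
    ((integrableOn_quantileFn π hf).sub (integrableOn_quantileFn π hg)).abs
  have hfg : Integrable (fun w => |f w - g w|) π := (hf.sub hg).abs
  have h := lintegral_abs_quantileFn_sub_le π hf.aemeasurable hg.aemeasurable
  rw [← ofReal_integral_eq_lintegral_ofReal hQ (ae_of_all _ fun _ => abs_nonneg _),
    ← ofReal_integral_eq_lintegral_ofReal hfg (ae_of_all _ fun _ => abs_nonneg _)] at h
  exact (ENNReal.ofReal_le_ofReal_iff (integral_nonneg fun _ => abs_nonneg _)).1 h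

theorem abs_spectralRisk_sub_le (hf : Integrable f π) (hg : Integrable g π) {σ : ℝ → ℝ} {M : ℝ}
    (hσ_nonneg : ∀ u ∈ Ioo (0 : ℝ) 1, 0 ≤ σ u) (hσ_mono : MonotoneOn σ (Ioo 0 1))
    (hσ_bdd : ∀ u ∈ Ioo (0 : ℝ) 1, σ u ≤ M) :
    |spectralRisk π f σ - spectralRisk π g σ| ≤ (∫ w, |f w - g w| ∂π) * M := by
  have hhalf : (2⁻¹ : ℝ) ∈ Ioo 0 1 := ⟨by norm_num, by norm_num⟩
  have hM : 0 ≤ M := (hσ_nonneg _ hhalf).trans (hσ_bdd _ hhalf)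
  have hσ_meas : AEStronglyMeasurable σ (volume.restrict (Ioo 0 1)) :=
    (aemeasurable_restrict_of_monotoneOn measurableSet_Ioo hσ_mono).aestronglyMeasurable
  have hσ_norm : ∀ᵐ u ∂volume.restrict (Ioo (0 : ℝ) 1), ‖σ u‖ ≤ M := by
    filter_upwards [ae_restrict_mem measurableSet_Ioo] with u hu
    rw [Real.norm_eq_abs, abs_of_nonneg (hσ_nonneg u hu)]
    exact hσ_bdd u hu
  have hrisk : ∀ h, spectralRisk π h σ = ∫ u in Ioo 0 1, σ u * quantileFn π h u := fun h => by
    simp only [spectralRisk, intervalIntegral.integral_of_le zero_le_one,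
      integral_Ioc_eq_integral_Ioo, mul_comm]
  have hint : ∀ h, Integrable h π → IntegrableOn (fun u => σ u * quantileFn π h u) (Ioo 0 1) :=
    fun h hh => (integrableOn_quantileFn π hh).bdd_mul hσ_meas hσ_norm
  have hdiff := ((integrableOn_quantileFn π hf).sub (integrableOn_quantileFn π hg)).abs
  rw [hrisk, hrisk, ← integral_sub (hint f hf) (hint g hg), ← Real.norm_eq_abs]
  calc ‖∫ u in Ioo 0 1, σ u * quantileFn π f u - σ u * quantileFn π g u‖
      ≤ ∫ u in Ioo 0 1, M * |quantileFn π f u - quantileFn π g u| := by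
        refine norm_integral_le_of_norm_le (hdiff.const_mul M) ?_
        filter_upwards [hσ_norm] with u hu
        rw [← mul_sub, norm_mul, Real.norm_eq_abs (_ - _)]
        exact mul_le_mul_of_nonneg_right hu (abs_nonneg _)
    _ = M * ∫ u in Ioo 0 1, |quantileFn π f u - quantileFn π g u| := integral_const_mul _ _
    _ ≤ M * ∫ w, |f w - g w| ∂π :=
        mul_le_mul_of_nonneg_left (integral_abs_quantileFn_sub_le π hf hg) hM
    _ = (∫ w, |f w - g w| ∂π) * M := mul_comm _ _

end QuantileFn

theorem stmt_17_general {W : Type*} [MeasurableSpace W] [PseudoMetricSpace W]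
    (r Cq rq : ℝ)
    -- the spectral function σ : bounded, nonnegative, increasing, ∫σ = 1; Mσ = ‖σ‖_∞
    (σ : ℝ → ℝ) (Mσ : ℝ)
    (hσ_nonneg : ∀ u ∈ Set.Ico (0:ℝ) 1, 0 ≤ σ u)
    (hσ_mono : MonotoneOn σ (Set.Ico (0:ℝ) 1))
    (hσ_bdd : ∀ u ∈ Set.Ico (0:ℝ) 1, σ u ≤ Mσ)
    -- the measures and losses
    (πn : ℕ → Measure W) (π : Measure W)
    [IsProbabilityMeasure π]
    (Ln : ℕ → W → ℝ) (L : W → ℝ)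
    (hLnint : ∀ n, Integrable (Ln n) (πn n) ∧ Integrable (Ln n) π)
    (hLint : Integrable L π)
    (hL1conv : Tendsto (fun n => ∫ w, |Ln n w - L w| ∂π) atTop (nhds 0))
    (hWconv : Tendsto (fun n => wassersteinDist r (πn n) π) atTop (nhds 0))
    -- the Pichler estimate for Hölder losses (assumed)
    (hPichler : ∀ n, |spectralRisk (πn n) (Ln n) σ - spectralRisk π (Ln n) σ|
        ≤ Cq * wassersteinDist r (πn n) π *
          (∫ u in (0:ℝ)..1, σ u ^ rq) ^ (1 / rq)) :
    (∀ n, |spectralRisk (πn n) (Ln n) σ - spectralRisk π L σ|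
        ≤ Cq * wassersteinDist r (πn n) π * (∫ u in (0:ℝ)..1, σ u ^ rq) ^ (1 / rq)
          + (∫ w, |Ln n w - L w| ∂π) * Mσ) ∧
    Tendsto (fun n => spectralRisk (πn n) (Ln n) σ) atTop
      (nhds (spectralRisk π L σ)) := by
  have hstab : ∀ n, |spectralRisk (πn n) (Ln n) σ - spectralRisk π L σ|
      ≤ Cq * wassersteinDist r (πn n) π * (∫ u in (0:ℝ)..1, σ u ^ rq) ^ (1 / rq)
        + (∫ w, |Ln n w - L w| ∂π) * Mσ := fun n =>
    (abs_sub_le _ (spectralRisk π (Ln n) σ) _).trans <| add_le_add (hPichler n) <|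
      abs_spectralRisk_sub_le π (hLnint n).2 hLint
        (fun u hu => hσ_nonneg u (Ioo_subset_Ico_self hu)) (hσ_mono.mono Ioo_subset_Ico_self)
        (fun u hu => hσ_bdd u (Ioo_subset_Ico_self hu))
  refine ⟨hstab, tendsto_iff_norm_sub_tendsto_zero.2 (squeeze_zero (fun _ => norm_nonneg _)
    (fun n => (Real.norm_eq_abs _).trans_le (hstab n)) ?_)⟩
  simpa using ((hWconv.const_mul Cq).mul_const _).add (hL1conv.mul_const Mσ)

theorem stmt_17 {W : Type*} [MeasurableSpace W] [PseudoMetricSpace W] [BorelSpace W]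
    (r q Cq rq : ℝ) (hr : 1 ≤ r) (hq0 : 0 < q) (hq1 : q ≤ 1) (hqr : q < r)
    (hCq : 0 ≤ Cq) (hrq : r / (r - q) ≤ rq)
    -- the spectral function σ : bounded, nonnegative, increasing, ∫σ = 1; Mσ = ‖σ‖_∞
    (σ : ℝ → ℝ) (Mσ : ℝ)
    (hσ_nonneg : ∀ u ∈ Set.Ico (0:ℝ) 1, 0 ≤ σ u)
    (hσ_mono : MonotoneOn σ (Set.Ico (0:ℝ) 1))
    (hσ_bdd : ∀ u ∈ Set.Ico (0:ℝ) 1, σ u ≤ Mσ)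
    (hσ_one : ∫ u in (0:ℝ)..1, σ u = 1)
    -- the measures and losses
    (πn : ℕ → Measure W) (π : Measure W)
    (hπnprob : ∀ n, IsProbabilityMeasure (πn n)) [IsProbabilityMeasure π]
    (w₀ : W)
    (hmomn : ∀ n, Integrable (fun w => dist w w₀ ^ r) (πn n))
    (hmom : Integrable (fun w => dist w w₀ ^ r) π)
    (Ln : ℕ → W → ℝ) (L : W → ℝ)
    (hHolder : ∀ n w w', |Ln n w - Ln n w'| ≤ Cq * dist w w' ^ q)
    (hLnint : ∀ n, Integrable (Ln n) (πn n) ∧ Integrable (Ln n) π)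
    (hLint : Integrable L π)
    (hL1conv : Tendsto (fun n => ∫ w, |Ln n w - L w| ∂π) atTop (nhds 0))
    (hWconv : Tendsto (fun n => wassersteinDist r (πn n) π) atTop (nhds 0))
    -- the Pichler estimate for Hölder losses (assumed)
    (hPichler : ∀ n, |spectralRisk (πn n) (Ln n) σ - spectralRisk π (Ln n) σ|
        ≤ Cq * wassersteinDist r (πn n) π *
          (∫ u in (0:ℝ)..1, σ u ^ rq) ^ (1 / rq)) :
    (∀ n, |spectralRisk (πn n) (Ln n) σ - spectralRisk π L σ|
        ≤ Cq * wassersteinDist r (πn n) π * (∫ u in (0:ℝ)..1, σ u ^ rq) ^ (1 / rq)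
          + (∫ w, |Ln n w - L w| ∂π) * Mσ) ∧
    Tendsto (fun n => spectralRisk (πn n) (Ln n) σ) atTop
      (nhds (spectralRisk π L σ)) :=
  stmt_17_general r Cq rq σ Mσ hσ_nonneg hσ_mono hσ_bdd πn π Ln L hLnint hLint hL1conv hWconv
    hPichler
end

section
/- Finite-dimensional MES duality: for finite sets X = {1,…,N_X}, Y = {1,…,N_Y}, probability vectors μ, ν, loss matrix L, and α ∈ (0,1), the maximum over all (π, Θ) with π a coupling of μ and ν, Θ a probability matrix with 0 ≤ Θ_{ij} ≤ (1-α)^{-1} π_{ij}, of Σ_{ij} L_{ij}Θ_{ij}, equals the minimum over (φ, ψ, ρ, β) with (1-α)(φ_i + ψ_j) ≥ ρ_{ij}, ρ_{ij} + β ≥ L_{ij}, ρ_{ij} ≥ 0, of Σ_i φ_i μ_i + Σ_j ψ_j ν_j + β; moreover both optima are attained. -/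
/-!
After introducing the slack `σ = (1 - α)⁻¹ π - Θ ≥ 0`, the two problems are a linear program in
standard form, `max c ⬝ x` subject to `A x = b, x ≥ 0`, and its dual, `min b ⬝ y` subject to
`Aᵀ y ≥ c`. The primal feasible set contains the independent coupling `π = Θ = μ ⊗ ν` and is
bounded, hence compact, so the maximum is attained. Strong duality follows from Farkas' lemma,
i.e. from separating `b` from the cone `A '' {x ≥ 0}`; that this finitely generated cone is closed
is Carathéodory's reduction: a nonnegative combination of linearly dependent vectors can be
rewritten with one coefficient equal to zero.
-/

open Set Finset Matrix

theorem Sum.exists_elim_eq {α β γ : Type*} (x : α ⊕ β → γ) : ∃ f g, Sum.elim f g = x :=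
  ⟨_, _, Sum.elim_comp_inl_inr x⟩

theorem exists_nonneg_sub_smul_eq_zero {ι : Type*} [Fintype ι] {u l : ι → ℝ} (hu : 0 ≤ u)
    (hl : ∃ j, 0 < l j) : ∃ t : ℝ, 0 ≤ u - t • l ∧ ∃ j, (u - t • l) j = 0 := by
  classical
  obtain ⟨j₀, hj₀⟩ := hl
  obtain ⟨j, hj, hmin⟩ := (univ.filter fun j => 0 < l j).exists_min_image (fun j => u j / l j)
    ⟨j₀, by simpa using hj₀⟩
  have hlj : 0 < l j := (mem_filter.1 hj).2
  refine ⟨u j / l j, fun i => ?_, j, by simp [hlj.ne']⟩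
  simp only [Pi.zero_apply, Pi.sub_apply, Pi.smul_apply, smul_eq_mul, sub_nonneg]
  rcases lt_or_ge 0 (l i) with hli | hli
  · exact (le_div_iff₀ hli).1 (hmin i (by simpa using hli))
  · exact (mul_nonpos_of_nonneg_of_nonpos (div_nonneg (hu j) hlj.le) hli).trans (hu i)

theorem image_extendByZero_Ici {ι : Type*} (j : ι) :
    Function.ExtendByZero.linearMap ℝ (Subtype.val : {i // i ≠ j} → ι) '' Set.Ici 0 =
      {u | 0 ≤ u ∧ u j = 0} := by
  ext u
  simp only [Set.mem_image, Set.mem_Ici]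
  constructor
  · rintro ⟨w, hw, rfl⟩
    refine ⟨fun i => ?_, by simp⟩
    by_cases hi : i = j
    · subst hi; simp
    · simpa [Subtype.val_injective.extend_apply w (0 : ι → ℝ) (⟨i, hi⟩ : {i // i ≠ j})]
        using hw ⟨i, hi⟩
  · rintro ⟨hu, huj⟩
    refine ⟨fun i => u i, fun i => hu i, funext fun i => ?_⟩
    by_cases hi : i = j
    · subst hi; simp [huj]
    · exact Subtype.val_injective.extend_apply (fun i : {i // i ≠ j} => u i) 0 ⟨i, hi⟩

theorem LinearMap.isClosed_image_Ici_zero {ι E : Type*} [Fintype ι] [AddCommGroup E]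
    [TopologicalSpace E] [IsTopologicalAddGroup E] [Module ℝ E] [ContinuousSMul ℝ E] [T2Space E]
    (f : (ι → ℝ) →ₗ[ℝ] E) : IsClosed (f '' Set.Ici 0) := by
  classical
  induction h : Fintype.card ι using Nat.strong_induction_on generalizing ι with
  | _ n ih =>
  by_cases hf : LinearMap.ker f = ⊥
  · exact (f.isClosedEmbedding_of_injective hf).isClosedMap _ isClosed_Ici
  obtain ⟨l, hfl, hl⟩ : ∃ l, f l = 0 ∧ ∃ j, 0 < l j := by
    obtain ⟨l, hfl, hl0⟩ := (Submodule.ne_bot_iff _).1 hf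
    obtain ⟨j, hj⟩ := Function.ne_iff.1 hl0
    rcases hj.lt_or_gt with hj | hj
    · exact ⟨-l, by simpa using hfl, j, by simpa using hj⟩
    · exact ⟨l, hfl, j, hj⟩
  have hcover : f '' Set.Ici 0 = ⋃ j, f '' {u | 0 ≤ u ∧ u j = 0} := by
    refine subset_antisymm ?_ (Set.iUnion_subset fun j => Set.image_mono fun u hu => hu.1)
    rintro _ ⟨u, hu, rfl⟩
    obtain ⟨t, ht, j, hj⟩ := exists_nonneg_sub_smul_eq_zero hu hl
    exact Set.mem_iUnion.2 ⟨j, u - t • l, ⟨ht, hj⟩, by simp [hfl]⟩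
  rw [hcover]
  refine isClosed_iUnion_of_finite fun j => ?_
  rw [← image_extendByZero_Ici, ← Set.image_comp, ← LinearMap.coe_comp]
  exact ih _ (h ▸ Fintype.card_subtype_lt (p := (· ≠ j)) (not_not_intro rfl)) _ rfl

namespace Matrix

variable {m n : Type*} [Fintype n] (A : Matrix m n ℝ) {b : m → ℝ} {c : n → ℝ}

theorem exists_isGreatest_of_forall_le {u : n → ℝ} (hne : ∃ x, 0 ≤ x ∧ A *ᵥ x = b)
    (hbdd : ∀ x, 0 ≤ x → A *ᵥ x = b → x ≤ u) :
    ∃ v, IsGreatest ((c ⬝ᵥ ·) '' {x | 0 ≤ x ∧ A *ᵥ x = b}) v := by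
  have hcompact : IsCompact {x | 0 ≤ x ∧ A *ᵥ x = b} :=
    isCompact_Icc.of_isClosed_subset
      (isClosed_Ici.inter
        (isClosed_eq A.mulVecLin.continuous_of_finiteDimensional continuous_const))
      fun x hx => ⟨hx.1, hbdd x hx.1 hx.2⟩
  exact (hcompact.image (continuous_const.dotProduct continuous_id)).exists_isGreatest
    (Set.Nonempty.image _ hne)

variable [Fintype m]

theorem exists_vecMul_nonneg_and_dotProduct_neg
    (hb : ∀ x, 0 ≤ x → A *ᵥ x ≠ b) : ∃ y, 0 ≤ y ᵥ* A ∧ y ⬝ᵥ b < 0 := by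
  classical
  set C := A.mulVecLin '' Set.Ici 0
  have hbC : b ∉ C := fun ⟨x, hx, hxb⟩ => hb x hx hxb
  obtain ⟨g, u, hgb, hgC⟩ := geometric_hahn_banach_point_closed
    ((convex_Ici 0).linear_image A.mulVecLin) A.mulVecLin.isClosed_image_Ici_zero hbC
  have hu : u < 0 := by simpa using hgC 0 ⟨0, le_refl (0 : n → ℝ), by simp⟩
  -- `g` is bounded below on the cone `C`, hence nonnegative on it
  have hgC_nonneg : ∀ x, 0 ≤ x → 0 ≤ g (A *ᵥ x) := by
    intro x hx
    by_contra! hneg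
    have hmem : A *ᵥ ((u / g (A *ᵥ x)) • x) ∈ C :=
      ⟨_, smul_nonneg (div_nonneg_of_nonpos hu.le hneg.le) hx, rfl⟩
    have := hgC _ hmem
    rw [mulVec_smul, map_smul, smul_eq_mul, div_mul_cancel₀ _ hneg.ne] at this
    exact this.false
  obtain ⟨y, hy⟩ := (dotProductEquiv ℝ m).surjective g.toLinearMap
  have hgy : ∀ z, g z = y ⬝ᵥ z := fun z => (LinearMap.congr_fun hy z).symm
  refine ⟨y, fun i => ?_, (hgy b) ▸ hgb.trans hu⟩
  have := hgC_nonneg (Pi.single i 1) (Pi.single_nonneg.2 zero_le_one)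
  rwa [hgy, dotProduct_mulVec, dotProduct_single, mul_one] at this

theorem dotProduct_le_dotProduct_of_feasible {x : n → ℝ} {y : m → ℝ} (hx : 0 ≤ x)
    (hAx : A *ᵥ x = b) (hy : c ≤ y ᵥ* A) : c ⬝ᵥ x ≤ b ⬝ᵥ y :=
  calc c ⬝ᵥ x ≤ (y ᵥ* A) ⬝ᵥ x := dotProduct_le_dotProduct_of_nonneg_right hy hx
    _ = b ⬝ᵥ y := by rw [← dotProduct_mulVec, hAx, dotProduct_comm]

theorem exists_dual_le_of_forall_le {x₀ : n → ℝ} (hx₀ : 0 ≤ x₀) (hAx₀ : A *ᵥ x₀ = b)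
    (hmax : ∀ x, 0 ≤ x → A *ᵥ x = b → c ⬝ᵥ x ≤ c ⬝ᵥ x₀) :
    ∃ y, c ≤ y ᵥ* A ∧ b ⬝ᵥ y ≤ c ⬝ᵥ x₀ := by
  set v := c ⬝ᵥ x₀
  -- Farkas' lemma for the bordered matrix `[A, -b; -cᵀ, v]`: a dual certificate `(y, η)` with
  -- `η > 0` gives the optimal dual point `y / η`
  set M : Matrix (m ⊕ Unit) (n ⊕ Unit) ℝ :=
    fromBlocks A (replicateCol Unit (-b)) (replicateRow Unit (-c)) (of fun _ _ => v)
  have hM : ∀ x (t : ℝ), M *ᵥ Sum.elim x (fun _ => t) =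
      Sum.elim (A *ᵥ x - t • b) (fun _ => v * t - c ⬝ᵥ x) := fun x t => by
    ext (i | _) <;> simp [M, mulVec, dotProduct, sub_eq_add_neg, mul_comm, add_comm]
  have hM' : ∀ y (η : ℝ), Sum.elim y (fun _ => η) ᵥ* M =
      Sum.elim (y ᵥ* A - η • c) (fun _ => v * η - b ⬝ᵥ y) := fun y η => by
    ext (i | _) <;> simp [M, vecMul, dotProduct, sub_eq_add_neg, mul_comm, add_comm]
  obtain ⟨y', hy'M, hy'd⟩ := M.exists_vecMul_nonneg_and_dotProduct_neg
    (b := Sum.elim 0 fun _ => -1) <| by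
    intro u hu hMu
    obtain ⟨x, t, rfl⟩ : ∃ x t, u = Sum.elim x fun _ => t :=
      ⟨u ∘ .inl, u (.inr ()), by ext (_ | ⟨⟩) <;> rfl⟩
    rw [hM] at hMu
    have hx : 0 ≤ x := fun i => hu (.inl i)
    have ht : 0 ≤ t := hu (.inr ())
    have hAx : A *ᵥ x = t • b := funext fun i => sub_eq_zero.1 (congrFun hMu (.inl i))
    have hcx : c ⬝ᵥ x = v * t + 1 := by
      linarith [show v * t - c ⬝ᵥ x = -1 from congrFun hMu (.inr ())]
    -- `(x₀ + x) / (1 + t)` would be a feasible point with value `v + 1 / (1 + t)`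
    have hpos : 0 < 1 + t := by linarith
    have := hmax ((1 + t)⁻¹ • (x₀ + x))
      (smul_nonneg (inv_nonneg.2 hpos.le) (add_nonneg hx₀ hx))
      (by rw [mulVec_smul, mulVec_add, hAx₀, hAx, inv_smul_eq_iff₀ hpos.ne', add_smul, one_smul])
    rw [dotProduct_smul, dotProduct_add, hcx, smul_eq_mul, inv_mul_le_iff₀ hpos] at this
    linarith
  obtain ⟨y, η, rfl⟩ : ∃ y η, y' = Sum.elim y fun _ => η :=
    ⟨y' ∘ .inl, y' (.inr ()), by ext (_ | ⟨⟩) <;> rfl⟩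
  rw [hM'] at hy'M
  have hη : 0 < η := by simpa using hy'd
  refine ⟨η⁻¹ • y, fun i => ?_, ?_⟩
  · rw [smul_vecMul, Pi.smul_apply, smul_eq_mul, le_inv_mul_iff₀ hη]
    simpa using hy'M (.inl i)
  · rw [dotProduct_smul, smul_eq_mul, inv_mul_le_iff₀ hη]
    linarith [show 0 ≤ v * η - b ⬝ᵥ y from hy'M (.inr ())]

theorem isLeast_dual_of_isGreatest {v : ℝ}
    (h : IsGreatest ((c ⬝ᵥ ·) '' {x | 0 ≤ x ∧ A *ᵥ x = b}) v) :
    IsLeast ((b ⬝ᵥ ·) '' {y | c ≤ y ᵥ* A}) v := by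
  obtain ⟨⟨x₀, ⟨hx₀, hAx₀⟩, rfl⟩, hmax⟩ := h
  obtain ⟨y, hy, hyv⟩ :=
    A.exists_dual_le_of_forall_le hx₀ hAx₀ fun x hx hAx => hmax ⟨x, ⟨hx, hAx⟩, rfl⟩
  refine ⟨⟨y, hy, le_antisymm hyv (A.dotProduct_le_dotProduct_of_feasible hx₀ hAx₀ hy)⟩, ?_⟩
  rintro _ ⟨y', hy', rfl⟩
  exact A.dotProduct_le_dotProduct_of_feasible hx₀ hAx₀ hy'

end Matrix

namespace MaxExpectedShortfall

variable {X Y : Type*} [Fintype X] [Fintype Y]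

def primalValues (μ : X → ℝ) (ν : Y → ℝ) (L : X → Y → ℝ) (α : ℝ) : Set ℝ :=
  {s : ℝ | ∃ π Θ : X → Y → ℝ,
    (∀ i j, 0 ≤ π i j) ∧ (∀ i j, 0 ≤ Θ i j) ∧
    (∀ i, ∑ j, π i j = μ i) ∧ (∀ j, ∑ i, π i j = ν j) ∧
    (∀ i j, Θ i j ≤ (1 - α)⁻¹ * π i j) ∧
    (∑ i, ∑ j, Θ i j = 1) ∧
    s = ∑ i, ∑ j, L i j * Θ i j}

def dualValues (μ : X → ℝ) (ν : Y → ℝ) (L : X → Y → ℝ) (α : ℝ) : Set ℝ :=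
  {s : ℝ | ∃ (φ : X → ℝ) (ψ : Y → ℝ) (ρ : X → Y → ℝ) (β : ℝ),
    (∀ i j, ρ i j ≤ (1 - α) * (φ i + ψ j)) ∧
    (∀ i j, L i j ≤ ρ i j + β) ∧
    (∀ i j, 0 ≤ ρ i j) ∧
    s = ∑ i, φ i * μ i + ∑ j, ψ j * ν j + β}

def rhs (μ : X → ℝ) (ν : Y → ℝ) : X ⊕ Y ⊕ (X × Y) ⊕ Unit → ℝ :=
  Sum.elim μ (Sum.elim ν (Sum.elim 0 1))

def objective (L : X → Y → ℝ) : (X × Y) ⊕ (X × Y) ⊕ (X × Y) → ℝ :=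
  Sum.elim 0 (Sum.elim (fun p => L p.1 p.2) 0)

theorem objective_dotProduct (L : X → Y → ℝ) (π Θ σ : X × Y → ℝ) :
    objective L ⬝ᵥ Sum.elim π (Sum.elim Θ σ) = ∑ i, ∑ j, L i j * Θ (i, j) := by
  simp [objective, dotProduct, Fintype.sum_prod_type]

theorem rhs_dotProduct (μ : X → ℝ) (ν : Y → ℝ) (φ : X → ℝ) (ψ : Y → ℝ) (ρ : X × Y → ℝ)
    (β : Unit → ℝ) :
    rhs μ ν ⬝ᵥ Sum.elim φ (Sum.elim ψ (Sum.elim ρ β)) =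
      ∑ i, φ i * μ i + ∑ j, ψ j * ν j + β () := by
  simp [rhs, dotProduct, mul_comm, add_assoc]

section StandardForm

variable [DecidableEq X] [DecidableEq Y]

/-- Standard form of the primal: the variables are `(π, Θ, σ)` with the slack `σ` of
`Θ ≤ (1 - α)⁻¹ π`, the rows are the marginal constraints for `μ` and `ν`, the slack equations
and the normalization of `Θ`. -/
noncomputable def constraintMatrix (α : ℝ) :
    Matrix (X ⊕ Y ⊕ (X × Y) ⊕ Unit) ((X × Y) ⊕ (X × Y) ⊕ (X × Y)) ℝ :=
  Matrix.of fun
    | .inl i, .inl p => if p.1 = i then 1 else 0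
    | .inr (.inl j), .inl p => if p.2 = j then 1 else 0
    | .inr (.inr (.inl q)), .inl p => if p = q then -(1 - α)⁻¹ else 0
    | .inr (.inr (.inl q)), .inr (.inl p) => if p = q then 1 else 0
    | .inr (.inr (.inl q)), .inr (.inr p) => if p = q then 1 else 0
    | .inr (.inr (.inr _)), .inr (.inl _) => 1
    | _, _ => 0

theorem constraintMatrix_mulVec (α : ℝ) (π Θ σ : X × Y → ℝ) :
    constraintMatrix α *ᵥ Sum.elim π (Sum.elim Θ σ) =
      Sum.elim (fun i => ∑ j, π (i, j)) (Sum.elim (fun j => ∑ i, π (i, j))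
        (Sum.elim (Θ + σ - (1 - α)⁻¹ • π) fun _ => ∑ p, Θ p)) := by
  ext (i | j | q | _)
  all_goals simp only [constraintMatrix, mulVec, dotProduct, Fintype.sum_sum_type]
  · simp [Fintype.sum_prod_type_right]
  · simp [Fintype.sum_prod_type]
  · simp [add_comm, sub_eq_add_neg]
  · simp

theorem vecMul_constraintMatrix (α : ℝ) (φ : X → ℝ) (ψ : Y → ℝ) (ρ : X × Y → ℝ)
    (β : Unit → ℝ) :
    Sum.elim φ (Sum.elim ψ (Sum.elim ρ β)) ᵥ* constraintMatrix α =
      Sum.elim (fun p => φ p.1 + ψ p.2 - (1 - α)⁻¹ * ρ p) (Sum.elim (ρ + fun _ => β ()) ρ) := by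
  ext (p | p | p) <;>
    simp [constraintMatrix, vecMul, dotProduct, Fintype.sum_sum_type, sub_eq_add_neg, mul_comm,
      add_assoc]

theorem constraintMatrix_mulVec_eq_rhs_iff {μ : X → ℝ} {ν : Y → ℝ} {α : ℝ}
    {π Θ σ : X × Y → ℝ} :
    constraintMatrix α *ᵥ Sum.elim π (Sum.elim Θ σ) = rhs μ ν ↔
      (∀ i, ∑ j, π (i, j) = μ i) ∧ (∀ j, ∑ i, π (i, j) = ν j) ∧
        (∀ p, Θ p + σ p = (1 - α)⁻¹ * π p) ∧ ∑ p, Θ p = 1 := by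
  simp [constraintMatrix_mulVec, rhs, funext_iff, sub_eq_zero]

theorem primalValues_eq_image (μ : X → ℝ) (ν : Y → ℝ) (L : X → Y → ℝ) (α : ℝ) :
    primalValues μ ν L α =
      (objective L ⬝ᵥ ·) '' {x | 0 ≤ x ∧ constraintMatrix α *ᵥ x = rhs μ ν} := by
  ext s
  constructor
  · rintro ⟨π, Θ, hπ, hΘ, hrow, hcol, hΘπ, hΘ1, rfl⟩
    refine ⟨Sum.elim (Function.uncurry π) (Sum.elim (Function.uncurry Θ)
      ((1 - α)⁻¹ • Function.uncurry π - Function.uncurry Θ)), ⟨?_, ?_⟩, ?_⟩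
    · simp only [Sum.nonneg_elim_iff]
      exact ⟨fun p => hπ _ _, fun p => hΘ _ _, fun ⟨i, j⟩ => by simpa using hΘπ i j⟩
    · rw [constraintMatrix_mulVec_eq_rhs_iff]
      exact ⟨hrow, hcol, fun p => by simp, by rwa [Fintype.sum_prod_type]⟩
    · exact objective_dotProduct ..
  · rintro ⟨x, ⟨hx, hAx⟩, rfl⟩
    obtain ⟨π, w, rfl⟩ := Sum.exists_elim_eq x
    obtain ⟨Θ, σ, rfl⟩ := Sum.exists_elim_eq w
    simp only [Sum.nonneg_elim_iff] at hx
    obtain ⟨hrow, hcol, hslack, hΘ1⟩ := constraintMatrix_mulVec_eq_rhs_iff.1 hAx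
    refine ⟨fun i j => π (i, j), fun i j => Θ (i, j), fun i j => hx.1 _, fun i j => hx.2.1 _,
      hrow, hcol, fun i j => ?_, by rwa [← Fintype.sum_prod_type'], objective_dotProduct ..⟩
    show Θ (i, j) ≤ (1 - α)⁻¹ * π (i, j)
    linarith [hslack (i, j), show 0 ≤ σ (i, j) from hx.2.2 _]

theorem dualValues_eq_image (μ : X → ℝ) (ν : Y → ℝ) (L : X → Y → ℝ) {α : ℝ} (hα : α < 1) :
    dualValues μ ν L α = (rhs μ ν ⬝ᵥ ·) '' {y | objective L ≤ y ᵥ* constraintMatrix α} := by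
  have h1α : 0 < 1 - α := sub_pos.2 hα
  ext s
  constructor
  · rintro ⟨φ, ψ, ρ, β, hρ, hL, hρ0, rfl⟩
    refine ⟨Sum.elim φ (Sum.elim ψ (Sum.elim (Function.uncurry ρ) fun _ => β)), ?_,
      rhs_dotProduct ..⟩
    simp only [Set.mem_ofPred_eq, vecMul_constraintMatrix, objective, Sum.elim_le_elim_iff]
    refine ⟨fun ⟨i, j⟩ => ?_, fun p => hL p.1 p.2, fun p => hρ0 p.1 p.2⟩
    simpa [inv_mul_le_iff₀ h1α] using hρ i j
  · rintro ⟨y, hy, rfl⟩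
    obtain ⟨φ, w, rfl⟩ := Sum.exists_elim_eq y
    obtain ⟨ψ, w, rfl⟩ := Sum.exists_elim_eq w
    obtain ⟨ρ, β, rfl⟩ := Sum.exists_elim_eq w
    simp only [Set.mem_ofPred_eq, vecMul_constraintMatrix, objective,
      Sum.elim_le_elim_iff] at hy
    obtain ⟨hρ, hL, hρ0⟩ := hy
    refine ⟨φ, ψ, fun i j => ρ (i, j), β (), fun i j => ?_, fun i j => hL (i, j),
      fun i j => hρ0 (i, j), rhs_dotProduct ..⟩
    have := hρ (i, j)
    simp only [Pi.zero_apply, sub_nonneg] at this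
    rwa [inv_mul_le_iff₀ h1α] at this

variable {μ : X → ℝ} {ν : Y → ℝ} {α : ℝ}

theorem exists_nonneg_constraintMatrix_mulVec_eq_rhs (hμ : ∀ i, 0 ≤ μ i) (hν : ∀ j, 0 ≤ ν j)
    (hμ1 : ∑ i, μ i = 1) (hν1 : ∑ j, ν j = 1) (hα0 : 0 ≤ α) (hα1 : α < 1) :
    ∃ x, 0 ≤ x ∧ constraintMatrix α *ᵥ x = rhs μ ν := by
  -- the independent coupling, with `Θ = π`
  set π : X × Y → ℝ := fun p => μ p.1 * ν p.2
  have hπ : 0 ≤ π := fun p => mul_nonneg (hμ _) (hν _)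
  have hκ : 0 ≤ (1 - α)⁻¹ - 1 := sub_nonneg.2 ((one_le_inv₀ (by linarith)).2 (by linarith))
  refine ⟨Sum.elim π (Sum.elim π (((1 - α)⁻¹ - 1) • π)), ?_, ?_⟩
  · simp only [Sum.nonneg_elim_iff]
    exact ⟨hπ, hπ, smul_nonneg hκ hπ⟩
  · rw [constraintMatrix_mulVec_eq_rhs_iff]
    refine ⟨fun i => ?_, fun j => ?_, fun p => ?_, ?_⟩
    · simp [π, ← Finset.mul_sum, hν1]
    · simp [π, ← Finset.sum_mul, hμ1]
    · simp only [Pi.smul_apply, smul_eq_mul]; ring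
    · simp [π, Fintype.sum_prod_type, ← Finset.mul_sum, hν1, hμ1]

theorem le_of_constraintMatrix_mulVec_eq_rhs (hμ : ∀ i, 0 ≤ μ i) (hμ1 : ∑ i, μ i = 1)
    (hα1 : α < 1) {x} (hx : 0 ≤ x) (hAx : constraintMatrix α *ᵥ x = rhs μ ν) :
    x ≤ Sum.elim (1 : X × Y → ℝ) (Sum.elim 1 fun _ => (1 - α)⁻¹) := by
  obtain ⟨π, w, rfl⟩ := Sum.exists_elim_eq x
  obtain ⟨Θ, σ, rfl⟩ := Sum.exists_elim_eq w
  simp only [Sum.nonneg_elim_iff] at hx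
  obtain ⟨hπ, hΘ, -⟩ := hx
  obtain ⟨hrow, -, hslack, hΘ1⟩ := constraintMatrix_mulVec_eq_rhs_iff.1 hAx
  have hπ1 : π ≤ 1 := fun ⟨i, j⟩ =>
    calc π (i, j) ≤ ∑ j', π (i, j') :=
          Finset.single_le_sum (fun j' _ => hπ (i, j')) (Finset.mem_univ j)
      _ = μ i := hrow i
      _ ≤ 1 := hμ1 ▸ Finset.single_le_sum (fun i' _ => hμ i') (Finset.mem_univ i)
  simp only [Sum.elim_le_elim_iff]
  refine ⟨hπ1, fun p =>
    (Finset.single_le_sum (fun p' _ => hΘ p') (Finset.mem_univ p)).trans_eq hΘ1, fun p => ?_⟩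
  have := hslack p
  have := mul_le_mul_of_nonneg_left (hπ1 p) (inv_nonneg.2 (sub_nonneg.2 hα1.le))
  simp only [Pi.one_apply, mul_one] at this ⊢
  linarith [show 0 ≤ Θ p from hΘ p]

end StandardForm

theorem exists_isGreatest_primalValues_and_isLeast_dualValues {μ : X → ℝ} {ν : Y → ℝ}
    (L : X → Y → ℝ) {α : ℝ} (hμ : ∀ i, 0 ≤ μ i) (hν : ∀ j, 0 ≤ ν j) (hμ1 : ∑ i, μ i = 1)
    (hν1 : ∑ j, ν j = 1) (hα0 : 0 ≤ α) (hα1 : α < 1) :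
    ∃ v, IsGreatest (primalValues μ ν L α) v ∧ IsLeast (dualValues μ ν L α) v := by
  classical
  rw [primalValues_eq_image, dualValues_eq_image _ _ _ hα1]
  obtain ⟨v, hv⟩ := (constraintMatrix α).exists_isGreatest_of_forall_le (c := objective L)
    (exists_nonneg_constraintMatrix_mulVec_eq_rhs hμ hν hμ1 hν1 hα0 hα1)
    (fun x hx hAx => le_of_constraintMatrix_mulVec_eq_rhs hμ hμ1 hα1 hx hAx)
  exact ⟨v, hv, (constraintMatrix α).isLeast_dual_of_isGreatest hv⟩

end MaxExpectedShortfall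

theorem stmt_19_general (NX NY : ℕ)
    (μ : Fin NX → ℝ) (ν : Fin NY → ℝ)
    (hμ0 : ∀ i, 0 ≤ μ i) (hν0 : ∀ j, 0 ≤ ν j)
    (hμ1 : ∑ i, μ i = 1) (hν1 : ∑ j, ν j = 1)
    (L : Fin NX → Fin NY → ℝ) (α : ℝ) (hα : α ∈ Set.Ioo (0:ℝ) 1) :
    ∃ v : ℝ,
      IsGreatest {s : ℝ | ∃ π Θ : Fin NX → Fin NY → ℝ,
        (∀ i j, 0 ≤ π i j) ∧ (∀ i j, 0 ≤ Θ i j) ∧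
        (∀ i, ∑ j, π i j = μ i) ∧ (∀ j, ∑ i, π i j = ν j) ∧
        (∀ i j, Θ i j ≤ (1 - α)⁻¹ * π i j) ∧
        (∑ i, ∑ j, Θ i j = 1) ∧
        s = ∑ i, ∑ j, L i j * Θ i j} v ∧
      IsLeast {s : ℝ | ∃ (φ : Fin NX → ℝ) (ψ : Fin NY → ℝ)
          (ρ : Fin NX → Fin NY → ℝ) (β : ℝ),
        (∀ i j, ρ i j ≤ (1 - α) * (φ i + ψ j)) ∧
        (∀ i j, L i j ≤ ρ i j + β) ∧
        (∀ i j, 0 ≤ ρ i j) ∧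
        s = ∑ i, φ i * μ i + ∑ j, ψ j * ν j + β} v :=
  MaxExpectedShortfall.exists_isGreatest_primalValues_and_isLeast_dualValues L hμ0 hν0 hμ1 hν1
    hα.1.le hα.2

theorem stmt_19 (NX NY : ℕ) (hNX : 0 < NX) (hNY : 0 < NY)
    (μ : Fin NX → ℝ) (ν : Fin NY → ℝ)
    (hμ0 : ∀ i, 0 ≤ μ i) (hν0 : ∀ j, 0 ≤ ν j)
    (hμ1 : ∑ i, μ i = 1) (hν1 : ∑ j, ν j = 1)
    (L : Fin NX → Fin NY → ℝ) (α : ℝ) (hα : α ∈ Set.Ioo (0:ℝ) 1) :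
    ∃ v : ℝ,
      IsGreatest {s : ℝ | ∃ π Θ : Fin NX → Fin NY → ℝ,
        (∀ i j, 0 ≤ π i j) ∧ (∀ i j, 0 ≤ Θ i j) ∧
        (∀ i, ∑ j, π i j = μ i) ∧ (∀ j, ∑ i, π i j = ν j) ∧
        (∀ i j, Θ i j ≤ (1 - α)⁻¹ * π i j) ∧
        (∑ i, ∑ j, Θ i j = 1) ∧
        s = ∑ i, ∑ j, L i j * Θ i j} v ∧
      IsLeast {s : ℝ | ∃ (φ : Fin NX → ℝ) (ψ : Fin NY → ℝ)
          (ρ : Fin NX → Fin NY → ℝ) (β : ℝ),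
        (∀ i j, ρ i j ≤ (1 - α) * (φ i + ψ j)) ∧
        (∀ i j, L i j ≤ ρ i j + β) ∧
        (∀ i j, 0 ≤ ρ i j) ∧
        s = ∑ i, φ i * μ i + ∑ j, ψ j * ν j + β} v :=
  stmt_19_general NX NY μ ν hμ0 hν0 hμ1 hν1 L α hα
end
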